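/- arXiv:2603.01483 — 5 statements merged into one kernel-verified Lean document; each statement's English description precedes it below -/
import Mathlib

section
/- Let B = [[x, b₁₂],[b₂₁, a]] ∈ M₂(ℂ) and let s, p ∈ ℂ satisfy b₁₂ + b₂₁ = s and b₁₂b₂₁ = ax − p. Then det(I − B*B) = 1 − |a|² − |x|² + |p|² − |s|²/2 − |s² − 4(ax−p)|/2. Moreover: (1) if |p| < 1, then ‖B‖ < 1 if and only if det(I − B*B) > 0; (2) if |p| ≤ 1, then ‖B‖ ≤ 1 if and only if det(I − B*B) ≥ 0. -/
/-- The operator norm of a 2×2 complex matrix, acting on the Euclidean space ℂ². -/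
noncomputable def opNorm (A : Matrix (Fin 2) (Fin 2) ℂ) : ℝ :=
  ‖LinearMap.toContinuousLinearMap (Matrix.toEuclideanLin A)‖

/-!
For `M = Bᴴ * B`, Hermitian and positive semidefinite with eigenvalues `λ₀, λ₁ ≥ 0`, one has
`‖B‖² = max λᵢ`, `λ₀ λ₁ = det M = |det B|² = |p|²` and
`det (1 - M) = (1 - λ₀)(1 - λ₁) = 1 - tr M + det M`. The trace is the sum of the squared moduli
of the entries, and since `s² - 4(ax - p) = (b₁₂ - b₂₁)²` the parallelogram law turns it into the
stated formula. When `λ₀ λ₁ < 1`, the product `(1 - λ₀)(1 - λ₁)` is positive only if both factors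
are: both negative would force `λ₀ λ₁ > 1`.
-/

lemma lt_one_and_lt_one_iff_of_mul_lt_one {a b : ℝ} (h : a * b < 1) :
    a < 1 ∧ b < 1 ↔ 0 < (1 - a) * (1 - b) := by
  refine ⟨fun ⟨ha, hb⟩ => mul_pos (by linarith) (by linarith), fun hpos => ?_⟩
  by_contra! hge
  rcases lt_or_ge a 1 with ha | ha
  · nlinarith [hge ha]
  · nlinarith

lemma le_one_and_le_one_iff_of_mul_le_one {a b : ℝ} (h : a * b ≤ 1) :
    a ≤ 1 ∧ b ≤ 1 ↔ 0 ≤ (1 - a) * (1 - b) := by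
  refine ⟨fun ⟨ha, hb⟩ => mul_nonneg (by linarith) (by linarith), fun hnn => ?_⟩
  by_contra! hgt
  rcases le_or_gt a 1 with ha | ha
  · nlinarith [hgt ha]
  · nlinarith

namespace Matrix

open scoped Matrix Norms.L2Operator ComplexOrder

variable {𝕜 : Type*} [RCLike 𝕜]

lemma det_one_sub_fin_two {R : Type*} [CommRing R] (A : Matrix (Fin 2) (Fin 2) R) :
    (1 - A).det = 1 - A.trace + A.det := by
  simp only [det_fin_two, trace_fin_two, sub_apply, one_apply_eq, one_apply_ne zero_ne_one,
    one_apply_ne one_ne_zero]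
  ring

lemma trace_conjTranspose_mul_self {m n : Type*} [Fintype m] [Fintype n] (A : Matrix m n 𝕜) :
    (Aᴴ * A).trace = ∑ j, ∑ i, ((‖A i j‖ ^ 2 : ℝ) : 𝕜) := by
  simp [trace, mul_apply, RCLike.conj_mul]

lemma det_conjTranspose_mul_self {n : Type*} [Fintype n] [DecidableEq n] (A : Matrix n n 𝕜) :
    (Aᴴ * A).det = ((‖A.det‖ ^ 2 : ℝ) : 𝕜) := by
  simp [det_mul, det_conjTranspose, RCLike.conj_mul]

lemma IsHermitian.det_one_sub_fin_two {A : Matrix (Fin 2) (Fin 2) 𝕜} (hA : A.IsHermitian) :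
    (1 - A).det = (((1 - hA.eigenvalues 0) * (1 - hA.eigenvalues 1) : ℝ) : 𝕜) := by
  rw [Matrix.det_one_sub_fin_two, hA.trace_eq_sum_eigenvalues, hA.det_eq_prod_eigenvalues]
  simp only [Fin.sum_univ_two, Fin.prod_univ_two, map_mul, map_sub, map_one]
  ring

lemma IsHermitian.l2_opNorm_eq_norm_eigenvalues {n : Type*} [Fintype n] [DecidableEq n]
    {A : Matrix n n 𝕜} (hA : A.IsHermitian) : ‖A‖ = ‖hA.eigenvalues‖ := by
  conv_lhs => rw [hA.spectral_theorem]
  simp only [Unitary.conjStarAlgAut_apply, ← Unitary.coe_star,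
      CStarRing.norm_mul_coe_unitary, CStarRing.norm_coe_unitary_mul, l2_opNorm_diagonal]
  exact ((algebraMap_isometry ℝ 𝕜).postcomp_pi).norm_map_of_map_zero (by simp) _

lemma l2_opNorm_sq_eq_norm_eigenvalues {m n : Type*} [Fintype m] [Fintype n] [DecidableEq n]
    (B : Matrix m n 𝕜) :
    ‖B‖ ^ 2 = ‖(isHermitian_conjTranspose_mul_self B).eigenvalues‖ := by
  rw [← IsHermitian.l2_opNorm_eq_norm_eigenvalues, l2_opNorm_conjTranspose_mul_self, sq]

section FinTwo

variable (B : Matrix (Fin 2) (Fin 2) 𝕜)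

lemma eigenvalues_conjTranspose_mul_self_mul_fin_two :
    (isHermitian_conjTranspose_mul_self B).eigenvalues 0 *
      (isHermitian_conjTranspose_mul_self B).eigenvalues 1 = ‖B.det‖ ^ 2 := by
  have := (isHermitian_conjTranspose_mul_self B).det_eq_prod_eigenvalues
  rw [det_conjTranspose_mul_self, Fin.prod_univ_two] at this
  exact_mod_cast this.symm

lemma l2_opNorm_lt_one_iff_fin_two (hB : ‖B.det‖ < 1) :
    ‖B‖ < 1 ↔ 0 < RCLike.re (1 - Bᴴ * B).det := by
  have hM := posSemidef_conjTranspose_mul_self B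
  rw [hM.isHermitian.det_one_sub_fin_two, RCLike.ofReal_re,
    ← lt_one_and_lt_one_iff_of_mul_lt_one (by
      rw [eigenvalues_conjTranspose_mul_self_mul_fin_two]; exact pow_lt_one₀ (norm_nonneg _) hB two_ne_zero),
    ← pow_lt_one_iff_of_nonneg (norm_nonneg B) two_ne_zero, l2_opNorm_sq_eq_norm_eigenvalues,
    pi_norm_lt_iff one_pos, Fin.forall_fin_two, Real.norm_of_nonneg (hM.eigenvalues_nonneg 0),
    Real.norm_of_nonneg (hM.eigenvalues_nonneg 1)]

lemma l2_opNorm_le_one_iff_fin_two (hB : ‖B.det‖ ≤ 1) :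
    ‖B‖ ≤ 1 ↔ 0 ≤ RCLike.re (1 - Bᴴ * B).det := by
  have hM := posSemidef_conjTranspose_mul_self B
  rw [hM.isHermitian.det_one_sub_fin_two, RCLike.ofReal_re,
    ← le_one_and_le_one_iff_of_mul_le_one (by
      rw [eigenvalues_conjTranspose_mul_self_mul_fin_two]; exact pow_le_one₀ (norm_nonneg _) hB),
    ← pow_le_one_iff_of_nonneg (norm_nonneg B) two_ne_zero, l2_opNorm_sq_eq_norm_eigenvalues,
    pi_norm_le_iff_of_nonneg zero_le_one, Fin.forall_fin_two,
    Real.norm_of_nonneg (hM.eigenvalues_nonneg 0), Real.norm_of_nonneg (hM.eigenvalues_nonneg 1)]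

end FinTwo

end Matrix

open scoped Matrix Matrix.Norms.L2Operator

lemma opNorm_eq_l2_opNorm (A : Matrix (Fin 2) (Fin 2) ℂ) : opNorm A = ‖A‖ := rfl

lemma norm_add_sq_add_norm_sq_sub_four_mul (u v : ℂ) :
    ‖u + v‖ ^ 2 + ‖(u + v) ^ 2 - 4 * (u * v)‖ = 2 * (‖u‖ ^ 2 + ‖v‖ ^ 2) := by
  rw [show (u + v) ^ 2 - 4 * (u * v) = (u - v) ^ 2 by ring, norm_pow,
    ← parallelogram_law_with_norm ℝ u v]

/-- Lemma 2.1: for B = [[x, b₁₂],[b₂₁, a]] with b₁₂ + b₂₁ = s and b₁₂b₂₁ = ax − p,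
det(I − B*B) = 1 − |a|² − |x|² + |p|² − |s|²/2 − |s² − 4(ax−p)|/2; moreover if |p| < 1 then
‖B‖ < 1 ↔ det(I − B*B) > 0, and if |p| ≤ 1 then ‖B‖ ≤ 1 ↔ det(I − B*B) ≥ 0. -/
theorem stmt0 (x a p s b12 b21 : ℂ)
    (hs : b12 + b21 = s) (hp : b12 * b21 = a * x - p)
    (B : Matrix (Fin 2) (Fin 2) ℂ) (hB : B = !![x, b12; b21, a]) :
    (1 - B.conjTranspose * B).det =
      ((1 - ‖a‖ ^ 2 - ‖x‖ ^ 2 + ‖p‖ ^ 2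
        - ‖s‖ ^ 2 / 2 - ‖s ^ 2 - 4 * (a * x - p)‖ / 2 : ℝ) : ℂ) ∧
    (‖p‖ < 1 →
      (opNorm B < 1 ↔
        0 < 1 - ‖a‖ ^ 2 - ‖x‖ ^ 2 + ‖p‖ ^ 2
          - ‖s‖ ^ 2 / 2 - ‖s ^ 2 - 4 * (a * x - p)‖ / 2)) ∧
    (‖p‖ ≤ 1 →
      (opNorm B ≤ 1 ↔
        0 ≤ 1 - ‖a‖ ^ 2 - ‖x‖ ^ 2 + ‖p‖ ^ 2
          - ‖s‖ ^ 2 / 2 - ‖s ^ 2 - 4 * (a * x - p)‖ / 2)) := by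
  have hdetB : B.det = p := by
    rw [hB, Matrix.det_fin_two_of]
    linear_combination -hp
  have hdet : (1 - Bᴴ * B).det = ((1 - ‖a‖ ^ 2 - ‖x‖ ^ 2 + ‖p‖ ^ 2
      - ‖s‖ ^ 2 / 2 - ‖s ^ 2 - 4 * (a * x - p)‖ / 2 : ℝ) : ℂ) := by
    have hpar := norm_add_sq_add_norm_sq_sub_four_mul b12 b21
    rw [hs, hp] at hpar
    have hE : 1 - ‖a‖ ^ 2 - ‖x‖ ^ 2 + ‖p‖ ^ 2 - ‖s‖ ^ 2 / 2 - ‖s ^ 2 - 4 * (a * x - p)‖ / 2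
        = 1 - (‖x‖ ^ 2 + ‖b21‖ ^ 2 + (‖b12‖ ^ 2 + ‖a‖ ^ 2)) + ‖p‖ ^ 2 := by
      linarith
    rw [hE, Matrix.det_one_sub_fin_two, Matrix.trace_conjTranspose_mul_self,
      Matrix.det_conjTranspose_mul_self, hdetB, hB]
    simp only [Fin.sum_univ_two, Matrix.of_apply, Matrix.cons_val', Matrix.cons_val_zero,
      Matrix.cons_val_one, Matrix.empty_val', Matrix.cons_val_fin_one]
    push_cast [RCLike.ofReal_eq_complex_ofReal]
    ring
  refine ⟨hdet, fun hp1 => ?_, fun hp1 => ?_⟩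
  · rw [opNorm_eq_l2_opNorm, B.l2_opNorm_lt_one_iff_fin_two (hdetB ▸ hp1), hdet,
      RCLike.re_to_complex, Complex.ofReal_re]
  · rw [opNorm_eq_l2_opNorm, B.l2_opNorm_le_one_iff_fin_two (hdetB ▸ hp1), hdet,
      RCLike.re_to_complex, Complex.ofReal_re]
end

section
/- A point (x, a, p, s) ∈ ℂ⁴ belongs to 𝔽 if and only if (s, ax−p) ∈ 𝔾₂, |p| < 1, and 1 − |a|² − |x|² + |p|² − |s|²/2 − |s² − 4(ax−p)|/2 > 0. -/
/-- The domain 𝔽 = {(a₁₁, a₂₂, det A, a₁₂ + a₂₁) : A ∈ M₂(ℂ), ‖A‖ < 1}. -/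
noncomputable def domF : Set (ℂ × ℂ × ℂ × ℂ) :=
  {w | ∃ A : Matrix (Fin 2) (Fin 2) ℂ, opNorm A < 1 ∧
    w = (A 0 0, A 1 1, A.det, A 0 1 + A 1 0)}

/-- The symmetrized bidisc 𝔾₂. -/
def G2 : Set (ℂ × ℂ) :=
  {w | ∃ z1 z2 : ℂ, ‖z1‖ < 1 ∧ ‖z2‖ < 1 ∧ w = (z1 + z2, z1 * z2)}

/-!
For a 2×2 matrix `A`, `‖A‖ < 1` means that the Hermitian form `‖v‖² - ‖Av‖²` of `1 - AᴴA` is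
positive definite. Completing the square gives the 2×2 Sylvester criterion: positivity of the
corner entry `1 - |a₁₁|² - |a₂₁|²` and of `det (1 - AᴴA) = 1 - Σ|aᵢⱼ|² + |det A|²`; given the
last condition, positivity of the corner is equivalent to `|det A| < 1`. Writing
`A = [[x, z₁], [z₂, a]]`, the point `(s, ax - p)` is `(z₁ + z₂, z₁z₂)`, and by the parallelogram
law `|s|²/2 + |s² - 4(ax - p)|/2 = |z₁|² + |z₂|²`, so the last condition of the theorem is
exactly `1 - Σ|aᵢⱼ|² + |det A|² > 0`.
-/

open Metric Complex Matrix ComplexConjugate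

theorem ContinuousLinearMap.opNorm_lt_iff_forall_norm_apply_lt {𝕜 E F : Type*} [RCLike 𝕜]
    [NormedAddCommGroup E] [NormedSpace 𝕜 E] [ProperSpace E]
    [SeminormedAddCommGroup F] [NormedSpace 𝕜 F] (T : E →L[𝕜] F) {r : ℝ} (hr : 0 < r) :
    ‖T‖ < r ↔ ∀ v ≠ 0, ‖T v‖ < r * ‖v‖ := by
  refine ⟨fun h v hv ↦ (T.le_opNorm v).trans_lt (mul_lt_mul_of_pos_right h (norm_pos_iff.2 hv)),
    fun h ↦ ?_⟩
  rcases (sphere (0 : E) 1).eq_empty_or_nonempty with hS | hS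
  · refine (T.opNorm_le_of_unit_norm le_rfl fun x hx ↦ ?_).trans_lt hr
    exact (hS.subset (mem_sphere_zero_iff_norm.2 hx)).elim
  · obtain ⟨v₀, hv₀, hmax⟩ := (isCompact_sphere (0 : E) 1).exists_isMaxOn hS
      (continuous_norm.comp T.continuous).continuousOn
    have hv₀' : ‖v₀‖ = 1 := mem_sphere_zero_iff_norm.1 hv₀
    calc ‖T‖ ≤ ‖T v₀‖ := T.opNorm_le_of_unit_norm (norm_nonneg _) fun x hx ↦
          hmax (mem_sphere_zero_iff_norm.2 hx)
      _ < r := by simpa [hv₀'] using h v₀ (norm_ne_zero_iff.1 (by simp [hv₀']))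

theorem Matrix.norm_apply_le_norm_toEuclideanLin {𝕜 m n : Type*} [RCLike 𝕜] [Fintype m]
    [Fintype n] [DecidableEq n] (A : Matrix m n 𝕜) (i : m) (j : n) :
    ‖A i j‖ ≤ ‖LinearMap.toContinuousLinearMap (Matrix.toEuclideanLin A)‖ := by
  calc ‖A i j‖ = ‖toEuclideanLin A (EuclideanSpace.single j 1) i‖ := by
        simp [mulVec_single]
    _ ≤ ‖toEuclideanLin A (EuclideanSpace.single j 1)‖ := PiLp.norm_apply_le _ i
    _ ≤ _ := by
      simpa using (LinearMap.toContinuousLinearMap (toEuclideanLin A)).le_opNorm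
        (EuclideanSpace.single j (1 : 𝕜))

theorem hermitian_form_fin_two_pos_iff (α γ : ℝ) (c : ℂ) :
    (∀ z w : ℂ, (z, w) ≠ 0 → 0 < α * normSq z + γ * normSq w - 2 * (conj z * c * w).re) ↔
      0 < α ∧ 0 < α * γ - normSq c := by
  have hsq : ∀ z w : ℂ, α * (α * normSq z + γ * normSq w - 2 * (conj z * c * w).re) =
      normSq (α * z - c * w) + (α * γ - normSq c) * normSq w := by
    intro z w
    simp only [normSq_apply, mul_re, mul_im, sub_re, sub_im, conj_re, conj_im, ofReal_re,
      ofReal_im]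
    ring
  constructor
  · intro h
    have hα : 0 < α := by simpa using h 1 0 (by simp)
    refine ⟨hα, ?_⟩
    have hv := mul_pos hα (h c α (by simp [hα.ne']))
    rw [hsq, mul_comm (α : ℂ) c, sub_self, map_zero, zero_add, normSq_ofReal] at hv
    exact pos_of_mul_pos_left hv (mul_self_nonneg α)
  · rintro ⟨hα, hδ⟩ z w hzw
    refine pos_of_mul_pos_right ?_ hα.le
    rw [hsq]
    rcases eq_or_ne w 0 with rfl | hw
    · have hz : z ≠ 0 := by simpa using hzw
      simpa [normSq_pos, hα.ne'] using hz
    · exact add_pos_of_nonneg_of_pos (normSq_nonneg _) (mul_pos hδ (normSq_pos.2 hw))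

theorem Matrix.norm_sq_sub_norm_toEuclideanLin_sq_fin_two (A : Matrix (Fin 2) (Fin 2) ℂ)
    (v : EuclideanSpace ℂ (Fin 2)) :
    ‖v‖ ^ 2 - ‖toEuclideanLin A v‖ ^ 2 =
      (1 - normSq (A 0 0) - normSq (A 1 0)) * normSq (v 0)
        + (1 - normSq (A 0 1) - normSq (A 1 1)) * normSq (v 1)
        - 2 * (conj (v 0) * (conj (A 0 0) * A 0 1 + conj (A 1 0) * A 1 1) * v 1).re := by
  simp only [EuclideanSpace.norm_sq_eq, Fin.sum_univ_two, ← normSq_eq_norm_sq,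
    toLpLin_apply, mulVec, dotProduct]
  simp only [normSq_apply, mul_re, mul_im, add_re, add_im, conj_re, conj_im]
  ring

theorem Matrix.forall_norm_toEuclideanLin_lt_iff_fin_two (A : Matrix (Fin 2) (Fin 2) ℂ) :
    (∀ v : EuclideanSpace ℂ (Fin 2), v ≠ 0 → ‖toEuclideanLin A v‖ < ‖v‖) ↔
      ∀ z w : ℂ, (z, w) ≠ 0 → 0 < (1 - normSq (A 0 0) - normSq (A 1 0)) * normSq z
        + (1 - normSq (A 0 1) - normSq (A 1 1)) * normSq w
        - 2 * (conj z * (conj (A 0 0) * A 0 1 + conj (A 1 0) * A 1 1) * w).re := by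
  have hlt : ∀ v : EuclideanSpace ℂ (Fin 2), ‖toEuclideanLin A v‖ < ‖v‖ ↔
      0 < ‖v‖ ^ 2 - ‖toEuclideanLin A v‖ ^ 2 := fun v ↦ by
    rw [sub_pos]; exact (pow_lt_pow_iff_left₀ (norm_nonneg _) (norm_nonneg _) two_ne_zero).symm
  simp only [hlt, norm_sq_sub_norm_toEuclideanLin_sq_fin_two]
  refine ⟨fun h z w hzw ↦ h !₂[z, w] ?_, fun h v hv ↦ h _ _ ?_⟩
  · exact fun h0 ↦ hzw (by simpa using congrArg (fun v : EuclideanSpace ℂ (Fin 2) ↦ (v 0, v 1)) h0)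
  · contrapose! hv
    ext i
    fin_cases i
    exacts [congrArg Prod.fst hv, congrArg Prod.snd hv]

theorem opNorm_lt_one_iff_fin_two (A : Matrix (Fin 2) (Fin 2) ℂ) :
    opNorm A < 1 ↔ ‖A.det‖ < 1 ∧
      ‖A 0 0‖ ^ 2 + ‖A 0 1‖ ^ 2 + ‖A 1 0‖ ^ 2 + ‖A 1 1‖ ^ 2 < 1 + ‖A.det‖ ^ 2 := by
  have hdet_one_sub : (1 - normSq (A 0 0) - normSq (A 1 0)) * (1 - normSq (A 0 1) - normSq (A 1 1))
      - normSq (conj (A 0 0) * A 0 1 + conj (A 1 0) * A 1 1) =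
      1 - (normSq (A 0 0) + normSq (A 0 1) + normSq (A 1 0) + normSq (A 1 1))
        + normSq A.det := by
    simp only [det_fin_two, normSq_apply, mul_re, mul_im, add_re, add_im, sub_re, sub_im,
      conj_re, conj_im]
    ring
  have hdet_le : ‖A.det‖ ≤ ‖A 0 0‖ * ‖A 1 1‖ + ‖A 0 1‖ * ‖A 1 0‖ := by
    simpa only [det_fin_two, norm_mul] using norm_sub_le (A 0 0 * A 1 1) (A 0 1 * A 1 0)
  rw [opNorm, ContinuousLinearMap.opNorm_lt_iff_forall_norm_apply_lt _ one_pos]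
  simp only [one_mul, LinearMap.coe_toContinuousLinearMap']
  rw [forall_norm_toEuclideanLin_lt_iff_fin_two, hermitian_form_fin_two_pos_iff]
  simp only [normSq_eq_norm_sq] at hdet_one_sub ⊢
  have hc := sq_nonneg ‖conj (A 0 0) * A 0 1 + conj (A 1 0) * A 1 1‖
  constructor
  · rintro ⟨hα, hδ⟩
    have hγ : 0 < 1 - ‖A 0 1‖ ^ 2 - ‖A 1 1‖ ^ 2 := pos_of_mul_pos_right (by linarith) hα.le
    refine ⟨?_, by linarith⟩
    nlinarith [sq_nonneg (‖A 0 0‖ - ‖A 1 1‖), sq_nonneg (‖A 0 1‖ - ‖A 1 0‖)]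
  · rintro ⟨hd, hsum⟩
    have hd2 : ‖A.det‖ ^ 2 < 1 := pow_lt_one₀ (norm_nonneg _) hd two_ne_zero
    refine ⟨?_, by linarith⟩
    nlinarith

theorem Complex.norm_add_sq_add_norm_discrim (z₁ z₂ : ℂ) :
    ‖z₁ + z₂‖ ^ 2 / 2 + ‖(z₁ + z₂) ^ 2 - 4 * (z₁ * z₂)‖ / 2 = ‖z₁‖ ^ 2 + ‖z₂‖ ^ 2 := by
  have h := parallelogram_law_with_norm ℂ z₁ z₂
  rw [show (z₁ + z₂) ^ 2 - 4 * (z₁ * z₂) = (z₁ - z₂) ^ 2 by ring, norm_pow]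
  nlinarith [h]

/-- Proposition 2.2: (x, a, p, s) ∈ 𝔽 iff (s, ax−p) ∈ 𝔾₂, |p| < 1, and
1 − |a|² − |x|² + |p|² − |s|²/2 − |s² − 4(ax−p)|/2 > 0. -/
theorem stmt1 (x a p s : ℂ) :
    (x, a, p, s) ∈ domF ↔
      (s, a * x - p) ∈ G2 ∧ ‖p‖ < 1 ∧
      0 < 1 - ‖a‖ ^ 2 - ‖x‖ ^ 2 + ‖p‖ ^ 2
          - ‖s‖ ^ 2 / 2 - ‖s ^ 2 - 4 * (a * x - p)‖ / 2 := by
  constructor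
  · rintro ⟨A, hA, hw⟩
    obtain ⟨rfl, rfl, rfl, rfl⟩ : x = A 0 0 ∧ a = A 1 1 ∧ p = A.det ∧ s = A 0 1 + A 1 0 := by
      simpa using hw
    obtain ⟨hdet, hsum⟩ := (opNorm_lt_one_iff_fin_two A).1 hA
    have hprod : A 1 1 * A 0 0 - A.det = A 0 1 * A 1 0 := by rw [det_fin_two]; ring
    refine ⟨⟨A 0 1, A 1 0, (norm_apply_le_norm_toEuclideanLin A 0 1).trans_lt hA,
      (norm_apply_le_norm_toEuclideanLin A 1 0).trans_lt hA, by rw [hprod]⟩, hdet, ?_⟩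
    rw [hprod]
    linarith [norm_add_sq_add_norm_discrim (A 0 1) (A 1 0)]
  · rintro ⟨⟨z₁, z₂, -, -, hw⟩, hp, hpos⟩
    obtain ⟨rfl, hq⟩ := Prod.mk.inj hw
    have hdet : (!![x, z₁; z₂, a]).det = p := by rw [det_fin_two_of]; linear_combination hq
    rw [hq] at hpos
    refine ⟨!![x, z₁; z₂, a], (opNorm_lt_one_iff_fin_two _).2 ?_, ?_⟩
    · simp only [hdet, of_apply, cons_val', cons_val_zero, cons_val_one, empty_val',
        cons_val_fin_one]
      exact ⟨hp, by linarith [norm_add_sq_add_norm_discrim z₁ z₂]⟩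
    · simp [hdet]
end

section
/- Let a ∈ ℂ with a ≠ 0 and x₁, x₂, x₃ ∈ ℂ. Then (a, x₁, x₂, x₃) ∈ ℍ_N if and only if (x₁, x₂, x₃, a + (x₁x₂ − x₃)/a) ∈ 𝔽. -/
/-- The normed hexablock ℍ_N = {(a₂₁, a₁₁, a₂₂, det A) : A ∈ M₂(ℂ), ‖A‖ < 1}. -/
noncomputable def HN : Set (ℂ × ℂ × ℂ × ℂ) :=
  {w | ∃ A : Matrix (Fin 2) (Fin 2) ℂ, opNorm A < 1 ∧
    w = (A 1 0, A 0 0, A 1 1, A.det)}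

/-!
If `A` realises `(x₁, x₂, x₃, s) ∈ 𝔽` with off-diagonal entries `b, c`, then
`x₁x₂ − x₃ = bc`, so `s = a + (x₁x₂ − x₃)/a` reads `b + c = a + bc/a`, i.e. `(b − a)(c − a) = 0`.
Hence `a` is one of the off-diagonal entries, and after transposing `A` if necessary (which
preserves the operator norm) it sits in position `(2, 1)`, giving a point of `ℍ_N`.
-/

open scoped Matrix.Norms.L2Operator
open Matrix WithLp

section L2OpNorm

variable {𝕜 m n : Type*} [RCLike 𝕜] [Fintype m] [Fintype n]

lemma EuclideanSpace.norm_toLp_star (v : n → 𝕜) :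
    ‖(toLp 2 (star v) : EuclideanSpace 𝕜 n)‖ = ‖(toLp 2 v : EuclideanSpace 𝕜 n)‖ := by
  simp only [EuclideanSpace.norm_eq, Pi.star_apply, norm_star]

variable [DecidableEq m] [DecidableEq n]

lemma Matrix.l2_opNorm_transpose_le (A : Matrix m n 𝕜) : ‖Aᵀ‖ ≤ ‖A‖ := by
  rw [l2_opNorm_def]
  refine ContinuousLinearMap.opNorm_le_bound _ (norm_nonneg A) fun x => ?_
  -- `Aᵀ x` is the complex conjugate of `Aᴴ x̄`, and `‖Aᴴ‖ = ‖A‖`.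
  have hconj : Aᵀ *ᵥ ofLp x = star (Aᴴ *ᵥ star (ofLp x)) := by
    rw [star_mulVec, star_star, conjTranspose_conjTranspose, mulVec_transpose]
  calc ‖(toLp 2 (Aᵀ *ᵥ ofLp x) : EuclideanSpace 𝕜 n)‖
      = ‖(toLp 2 (Aᴴ *ᵥ star (ofLp x)) : EuclideanSpace 𝕜 n)‖ := by
        rw [hconj, EuclideanSpace.norm_toLp_star]
    _ ≤ ‖Aᴴ‖ * ‖(toLp 2 (star (ofLp x)) : EuclideanSpace 𝕜 m)‖ :=
        l2_opNorm_mulVec _ (toLp 2 (star (ofLp x)))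
    _ = ‖A‖ * ‖x‖ := by
        rw [l2_opNorm_conjTranspose, EuclideanSpace.norm_toLp_star, toLp_ofLp]

lemma Matrix.l2_opNorm_transpose (A : Matrix m n 𝕜) : ‖Aᵀ‖ = ‖A‖ :=
  le_antisymm A.l2_opNorm_transpose_le (by simpa using Aᵀ.l2_opNorm_transpose_le)

end L2OpNorm

lemma eq_or_eq_of_add_mul_div_eq_add {K : Type*} [Field K] {a b c : K} (ha : a ≠ 0)
    (h : a + b * c / a = b + c) : b = a ∨ c = a := by
  have : (b - a) * (c - a) = 0 := by
    field_simp at h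
    linear_combination h
  rcases mul_eq_zero.mp this with hb | hc
  · exact .inl (sub_eq_zero.mp hb)
  · exact .inr (sub_eq_zero.mp hc)

lemma opNorm_transpose (A : Matrix (Fin 2) (Fin 2) ℂ) : opNorm Aᵀ = opNorm A :=
  l2_opNorm_transpose A

lemma mk_mem_HN {A : Matrix (Fin 2) (Fin 2) ℂ} (hA : opNorm A < 1) :
    (A 1 0, A 0 0, A 1 1, A.det) ∈ HN :=
  ⟨A, hA, rfl⟩

lemma mk_transpose_mem_HN {A : Matrix (Fin 2) (Fin 2) ℂ} (hA : opNorm A < 1) :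
    (A 0 1, A 0 0, A 1 1, A.det) ∈ HN := by
  simpa using mk_mem_HN (A := Aᵀ) (by rwa [opNorm_transpose])

/-- Proposition 2.12(2): for a ≠ 0, (a, x₁, x₂, x₃) ∈ ℍ_N iff
(x₁, x₂, x₃, a + (x₁x₂ − x₃)/a) ∈ 𝔽. -/
theorem stmt12 (a x1 x2 x3 : ℂ) (ha : a ≠ 0) :
    (a, x1, x2, x3) ∈ HN ↔ (x1, x2, x3, a + (x1 * x2 - x3) / a) ∈ domF := by
  constructor
  · rintro ⟨A, hA, h⟩
    simp only [Prod.mk.injEq] at h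
    obtain ⟨rfl, rfl, rfl, rfl⟩ := h
    refine ⟨A, hA, ?_⟩
    simp only [Prod.mk.injEq, true_and, det_fin_two]
    field_simp
    ring
  · rintro ⟨B, hB, h⟩
    simp only [Prod.mk.injEq] at h
    obtain ⟨rfl, rfl, rfl, hsum⟩ := h
    have hoffDiag : a + B 0 1 * B 1 0 / a = B 0 1 + B 1 0 := by
      rw [← hsum, det_fin_two]
      ring
    rcases eq_or_eq_of_add_mul_div_eq_add ha hoffDiag with h01 | h10
    · exact h01 ▸ mk_transpose_mem_HN hB
    · exact h10 ▸ mk_mem_HN hB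
end

section
/- For (x, a, p, s) ∈ ℂ⁴ the following are equivalent: (i) there exist real numbers θ, x₁, x₂, x₃, x₄ with x₁² + x₂² + x₃² + x₄² = 1 such that (x, a, p, s) = (e^{iθ}(x₃ + ix₄), −e^{iθ}(x₃ − ix₄), −e^{2iθ}, 2e^{iθ}x₂); (ii) there exist z, w ∈ ℂ with |z|² + |w|² ≤ 1 and η ∈ ℂ with |η| = 1 such that (x, a, p, s) = (z̄, −ηz, −η, w + w̄η); (iii) (x, a, p) ∈ b𝔼 and there exists w ∈ ℂ with |x|² + |w|² ≤ 1 and s = w − w̄p. -/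
/-- The distinguished boundary of the tetrablock: b𝔼 = {x : x₁ = x̄₂x₃, |x₃| = 1, |x₂| ≤ 1}. -/
def bE : Set (ℂ × ℂ × ℂ) :=
  {x | x.1 = (starRingEnd ℂ) x.2.1 * x.2.2 ∧ ‖x.2.2‖ = 1 ∧ ‖x.2.1‖ ≤ 1}

/-!
Write the unimodular `η` of (ii) as `e²` with `e = exp (iθ)`. Rotating by `ē` turns `x = z̄` into
`u = ē x = x₃ + i x₄`, and `s = w + w̄ η` into `e (v + v̄) = 2 e Re v` with `v = ē w`; the bound
`‖z‖² + ‖w‖² ≤ 1` then gives `(Re v)² + x₃² + x₄² ≤ 1`, and `x₁` takes up the slack.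
Condition (iii) is (ii) rewritten through `z = x̄`, `η = -p`: since `p p̄ = 1`, the equation
`a = -η z` becomes the relation `x = ā p` defining b𝔼.
-/

open Complex ComplexConjugate

lemma RCLike.mul_conj_eq_one_of_norm_eq_one {K : Type*} [RCLike K] {z : K} (hz : ‖z‖ = 1) :
    z * conj z = 1 := by
  simp [RCLike.mul_conj, hz]

lemma Complex.exp_two_mul_ofReal_mul_I (θ : ℝ) :
    exp (2 * θ * I) = exp (θ * I) ^ 2 := by
  rw [← exp_nat_mul]; push_cast; ring_nf

lemma Complex.exists_exp_two_mul_ofReal_mul_I_eq {η : ℂ} (hη : ‖η‖ = 1) :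
    ∃ θ : ℝ, exp (2 * θ * I) = η := by
  obtain ⟨φ, hφ⟩ : η ∈ Set.range fun φ : ℝ => exp (φ * I) := by
    rw [range_exp_mul_I]; simpa using hη
  exact ⟨φ / 2, by rw [← hφ]; push_cast; ring_nf⟩

lemma Complex.add_conj_mul_sq_eq {e : ℂ} (he : ‖e‖ = 1) (w : ℂ) :
    w + conj w * e ^ 2 = 2 * e * ((conj e * w).re : ℂ) := by
  have hre : 2 * ((conj e * w).re : ℂ) = conj e * w + e * conj w := by
    apply Complex.ext <;> simp <;> ring
  rw [mul_assoc, mul_comm e, ← mul_assoc, hre]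
  linear_combination (-w) * RCLike.mul_conj_eq_one_of_norm_eq_one he

def SpherePhaseForm (x a p s : ℂ) : Prop :=
  ∃ θ x1 x2 x3 x4 : ℝ, x1 ^ 2 + x2 ^ 2 + x3 ^ 2 + x4 ^ 2 = 1 ∧
    x = exp (θ * I) * ((x3 : ℂ) + (x4 : ℂ) * I) ∧
    a = -(exp (θ * I) * ((x3 : ℂ) - (x4 : ℂ) * I)) ∧
    p = -exp (2 * (θ : ℂ) * I) ∧
    s = 2 * exp (θ * I) * (x2 : ℂ)

def BallCircleForm (x a p s : ℂ) : Prop :=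
  ∃ z w η : ℂ, ‖z‖ ^ 2 + ‖w‖ ^ 2 ≤ 1 ∧ ‖η‖ = 1 ∧
    x = conj z ∧ a = -(η * z) ∧ p = -η ∧ s = w + conj w * η

def TetrablockBoundaryForm (x a p s : ℂ) : Prop :=
  (x, a, p) ∈ bE ∧ ∃ w : ℂ, ‖x‖ ^ 2 + ‖w‖ ^ 2 ≤ 1 ∧ s = w - conj w * p

lemma ballCircleForm_of_spherePhaseForm {x a p s : ℂ} (h : SpherePhaseForm x a p s) :
    BallCircleForm x a p s := by
  obtain ⟨θ, x1, x2, x3, x4, hsphere, rfl, rfl, rfl, rfl⟩ := h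
  set e := exp (θ * I)
  have he : ‖e‖ = 1 := norm_exp_ofReal_mul_I θ
  have hconj : conj ((x3 : ℂ) + x4 * I) = x3 - x4 * I := by simp; ring
  refine ⟨conj (e * (x3 + x4 * I)), e * x2, e ^ 2, ?_, by simp [he], (conj_conj _).symm, ?_,
    by rw [exp_two_mul_ofReal_mul_I], ?_⟩
  · have hnorm : ‖conj (e * (x3 + x4 * I))‖ ^ 2 = x3 ^ 2 + x4 ^ 2 := by
      rw [norm_conj, norm_mul, he, one_mul, Complex.sq_norm, normSq_add_mul_I]
    rw [hnorm, norm_mul, he, one_mul, norm_real, Real.norm_eq_abs, sq_abs]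
    nlinarith [sq_nonneg x1]
  · rw [map_mul, hconj]
    linear_combination (e * (x3 - x4 * I)) * RCLike.mul_conj_eq_one_of_norm_eq_one he
  · rw [add_conj_mul_sq_eq he, ← mul_assoc, conj_mul', he]; simp

lemma spherePhaseForm_of_ballCircleForm {x a p s : ℂ} (h : BallCircleForm x a p s) :
    SpherePhaseForm x a p s := by
  obtain ⟨z, w, η, hball, hη, rfl, rfl, rfl, rfl⟩ := h
  obtain ⟨θ, hθ⟩ := exists_exp_two_mul_ofReal_mul_I_eq hη
  set e := exp (θ * I)
  have he : ‖e‖ = 1 := norm_exp_ofReal_mul_I θ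
  have heη : e ^ 2 = η := by rw [← exp_two_mul_ofReal_mul_I, hθ]
  have hee := RCLike.mul_conj_eq_one_of_norm_eq_one he
  set u := conj e * conj z
  set v := conj e * w
  have hu : u.re ^ 2 + u.im ^ 2 = ‖z‖ ^ 2 := by
    have hnorm : ‖u‖ = ‖z‖ := by simp [u, he]
    rw [← hnorm]; linarith [sq_norm_sub_sq_re u]
  have hv : v.re ^ 2 ≤ ‖w‖ ^ 2 := by
    have hnorm : ‖v‖ = ‖w‖ := by simp [v, he]
    rw [← hnorm]; linarith [sq_norm_sub_sq_re v, sq_nonneg v.im]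
  refine ⟨θ, √(1 - (v.re ^ 2 + u.re ^ 2 + u.im ^ 2)), v.re, u.re, u.im, ?_, ?_, ?_, ?_, ?_⟩
  · rw [Real.sq_sqrt (by linarith)]; ring
  · rw [re_add_im]; linear_combination (-conj z) * hee
  · have hconj : (u.re : ℂ) - u.im * I = conj u := by apply Complex.ext <;> simp
    rw [hconj, map_mul, conj_conj, conj_conj, ← heη]; ring
  · rw [hθ]
  · rw [← heη, add_conj_mul_sq_eq he]

lemma tetrablockBoundaryForm_of_ballCircleForm {x a p s : ℂ} (h : BallCircleForm x a p s) :
    TetrablockBoundaryForm x a p s := by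
  obtain ⟨z, w, η, hball, hη, rfl, rfl, rfl, rfl⟩ := h
  have hz : ‖z‖ ≤ 1 := by nlinarith [norm_nonneg z, sq_nonneg ‖w‖]
  refine ⟨⟨?_, by simpa using hη, by simpa [hη] using hz⟩, w, by simpa using hball, by ring⟩
  show conj z = conj (-(η * z)) * -η
  rw [map_neg, map_mul]
  linear_combination (-conj z) * RCLike.mul_conj_eq_one_of_norm_eq_one hη

lemma ballCircleForm_of_tetrablockBoundaryForm {x a p s : ℂ} (h : TetrablockBoundaryForm x a p s) :
    BallCircleForm x a p s := by
  obtain ⟨⟨hx : x = conj a * p, hp : ‖p‖ = 1, -⟩, w, hball, rfl⟩ := h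
  refine ⟨conj x, w, -p, by simpa using hball, by simpa using hp, (conj_conj x).symm, ?_,
    (neg_neg p).symm, by ring⟩
  rw [hx, map_mul, conj_conj]
  linear_combination (-a) * RCLike.mul_conj_eq_one_of_norm_eq_one hp

/-- Theorem 3.3 (characterizations of the Shilov boundary of 𝔽): the conditions (i), (ii), (iii)
on (x, a, p, s) ∈ ℂ⁴ are equivalent. -/
theorem stmt14 (x a p s : ℂ) :
    ((∃ θ x1 x2 x3 x4 : ℝ, x1 ^ 2 + x2 ^ 2 + x3 ^ 2 + x4 ^ 2 = 1 ∧
        x = Complex.exp (θ * Complex.I) * ((x3 : ℂ) + (x4 : ℂ) * Complex.I) ∧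
        a = -(Complex.exp (θ * Complex.I) * ((x3 : ℂ) - (x4 : ℂ) * Complex.I)) ∧
        p = -Complex.exp (2 * (θ : ℂ) * Complex.I) ∧
        s = 2 * Complex.exp (θ * Complex.I) * (x2 : ℂ)) ↔
      (∃ z w η : ℂ, ‖z‖ ^ 2 + ‖w‖ ^ 2 ≤ 1 ∧ ‖η‖ = 1 ∧
        x = (starRingEnd ℂ) z ∧ a = -(η * z) ∧ p = -η ∧ s = w + (starRingEnd ℂ) w * η)) ∧
    ((∃ z w η : ℂ, ‖z‖ ^ 2 + ‖w‖ ^ 2 ≤ 1 ∧ ‖η‖ = 1 ∧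
        x = (starRingEnd ℂ) z ∧ a = -(η * z) ∧ p = -η ∧ s = w + (starRingEnd ℂ) w * η) ↔
      ((x, a, p) ∈ bE ∧ ∃ w : ℂ, ‖x‖ ^ 2 + ‖w‖ ^ 2 ≤ 1 ∧
        s = w - (starRingEnd ℂ) w * p)) :=
  ⟨⟨ballCircleForm_of_spherePhaseForm, spherePhaseForm_of_ballCircleForm⟩,
    ⟨tetrablockBoundaryForm_of_ballCircleForm, ballCircleForm_of_tetrablockBoundaryForm⟩⟩
end

section
/- Let (x, a, p, s) = (i, 1, i, 1−i) ∈ ℂ⁴. Then (x, a, p) ∈ b𝔼 and (s, −p) ∈ bΓ, but there exists no w ∈ ℂ with |x|² + |w|² ≤ 1 and s = w − w̄p. -/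
/-- The distinguished boundary of Γ: bΓ = {(z₁+z₂, z₁z₂) : |z₁| = |z₂| = 1}. -/
def bGammaSet : Set (ℂ × ℂ) :=
  {w | ∃ z1 z2 : ℂ, ‖z1‖ = 1 ∧ ‖z2‖ = 1 ∧ w = (z1 + z2, z1 * z2)}

open ComplexConjugate

theorem conj_mul_mem_bE {a p : ℂ} (ha : ‖a‖ ≤ 1) (hp : ‖p‖ = 1) : (conj a * p, a, p) ∈ bE :=
  ⟨rfl, hp, ha⟩

theorem add_mul_mem_bGammaSet {z₁ z₂ : ℂ} (h₁ : ‖z₁‖ = 1) (h₂ : ‖z₂‖ = 1) :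
    (z₁ + z₂, z₁ * z₂) ∈ bGammaSet :=
  ⟨z₁, z₂, h₁, h₂, rfl⟩

theorem eq_zero_of_norm_eq_one_of_sq_add_sq_le_one {E : Type*} [NormedAddGroup E] {x w : E}
    (hx : ‖x‖ = 1) (h : ‖x‖ ^ 2 + ‖w‖ ^ 2 ≤ 1) : w = 0 := by
  rw [hx] at h
  exact norm_eq_zero.mp (pow_eq_zero_iff two_ne_zero |>.mp (by nlinarith [sq_nonneg ‖w‖]))

theorem not_exists_sub_conj_mul_eq {x p s : ℂ} (hx : ‖x‖ = 1) (hs : s ≠ 0) :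
    ¬ ∃ w : ℂ, ‖x‖ ^ 2 + ‖w‖ ^ 2 ≤ 1 ∧ s = w - conj w * p := by
  rintro ⟨w, hle, rfl⟩
  obtain rfl := eq_zero_of_norm_eq_one_of_sq_add_sq_le_one hx hle
  simp at hs

/-- The example after Corollary 3.4: for (x, a, p, s) = (i, 1, i, 1−i), one has (x, a, p) ∈ b𝔼
and (s, −p) ∈ bΓ, but there is no w ∈ ℂ with |x|² + |w|² ≤ 1 and s = w − w̄p. -/
theorem stmt15 (x a p s : ℂ)
    (hx : x = Complex.I) (ha : a = 1) (hp : p = Complex.I) (hs : s = 1 - Complex.I) :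
    (x, a, p) ∈ bE ∧ (s, -p) ∈ bGammaSet ∧
    ¬ ∃ w : ℂ, ‖x‖ ^ 2 + ‖w‖ ^ 2 ≤ 1 ∧ s = w - (starRingEnd ℂ) w * p := by
  subst hx ha hp hs
  refine ⟨?_, ?_, not_exists_sub_conj_mul_eq (by simp) ?_⟩
  · simpa using conj_mul_mem_bE (a := 1) (p := Complex.I) (by simp) (by simp)
  · convert add_mul_mem_bGammaSet (z₁ := 1) (z₂ := -Complex.I) (by simp) (by simp) using 2 <;> ring
  · simp [sub_eq_zero, Complex.ext_iff]
end
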